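/- arXiv:2605.00305 — 2 statements merged into one kernel-verified Lean document; each statement's English description precedes it below -/
import Mathlib

section
/- Let φ: ℝ → ℝ be strictly convex satisfying the flatness hypothesis: for each irreducible fraction p/q, 0 < φ(x) − φ(p/q) − φ'₊(p/q)(x − p/q) < u_q(x − p/q) for x ∈ (p/q, p/q + 1/(4q)), with ∑_q q^{2+ν} u_q(1/q^{1+ν}) < ∞ for some ν ∈ (0,1). Let ψ be the convex conjugate of φ. Then ψ is C¹, Dψ is nonconstant and continuous, and D²ψ exists and equals 0 at Lebesgue-almost every point. -/
/-!
The conjugate `ψ` is differentiable with `ψ' = s`, where `s y` is the unique maximiser of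
`x * y - φ x`; `s` is monotone and `s ∘ φ'₊ = id`, so `s` is onto, hence continuous and
nonconstant.

Every irrational `x` satisfies `0 < x - p / q < 1 / (2 q ^ (1 + ν))` for infinitely many reduced
`p / q` (one-sided Dirichlet approximation, via Farey mediants). If `s y` lies in such a window,
then `y` lies between the right derivatives of `φ` at its ends, and flatness at `p / q` bounds
their difference by `2 q ^ (1 + ν) u_q (q ^ (-1 - ν))`. A bounded range of `y` meets only `O(q)`
windows of denominator `q`, so Borel–Cantelli makes `s⁻¹' {s y irrational}` Lebesgue-null,
while the Stieltjes measure `ds` does not charge the countably many level sets `s⁻¹' {r}`,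
`r ∈ ℚ`. Hence `ds` is singular and `s' = 0` almost everywhere.
-/

open Filter Set Topology MeasureTheory

lemma hasDerivWithinAt_Ioi_of_tendsto_slope {f : ℝ → ℝ} {x f' : ℝ}
    (h : Tendsto (fun t => (f (x + t) - f x) / t) (𝓝[>] 0) (𝓝 f')) :
    HasDerivWithinAt f f' (Ioi x) x := by
  rw [hasDerivWithinAt_iff_tendsto_slope' self_notMem_Ioi]
  have hshift : Tendsto (fun y => y - x) (𝓝[>] x) (𝓝[>] 0) := by
    refine tendsto_nhdsWithin_of_tendsto_nhds_of_eventually_within _ ?_ ?_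
    · simpa using ((continuous_sub_right x).tendsto' x (x - x) rfl).mono_left nhdsWithin_le_nhds
    · filter_upwards [self_mem_nhdsWithin] with y (hy : x < y) using sub_pos.2 hy
  refine (h.comp hshift).congr fun y => ?_
  simp [slope_def_field]

namespace ConvexOn

variable {f : ℝ → ℝ} {x y f' : ℝ}

lemma slope_le_of_hasDerivWithinAt_Ioi (hf : ConvexOn ℝ univ f) (hxy : x < y)
    (hf' : HasDerivWithinAt f f' (Ioi y) y) : slope f x y ≤ f' := by
  refine ge_of_tendsto ((hasDerivWithinAt_iff_tendsto_slope' self_notMem_Ioi).mp hf') ?_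
  filter_upwards [self_mem_nhdsWithin] with z (hz : y < z)
  simpa only [slope_def_field] using hf.slope_mono_adjacent trivial trivial hxy hz

lemma add_mul_sub_le_of_hasDerivWithinAt_Ioi (hf : ConvexOn ℝ univ f)
    (hf' : HasDerivWithinAt f f' (Ioi x) x) (z : ℝ) : f x + f' * (z - x) ≤ f z := by
  rcases lt_trichotomy x z with h | rfl | h
  · have := hf.le_slope_of_hasDerivWithinAt_Ioi trivial trivial h hf'
    rw [slope_def_field, le_div_iff₀ (sub_pos.2 h)] at this
    linarith
  · simp
  · have := hf.slope_le_of_hasDerivWithinAt_Ioi h hf'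
    rw [slope_def_field, div_le_iff₀ (sub_pos.2 h)] at this
    linarith

lemma rightDeriv_add_sub_le {φ φ' : ℝ → ℝ} (hφ : ConvexOn ℝ univ φ)
    (hφ' : ∀ x, HasDerivWithinAt φ (φ' x) (Ioi x) x) (r : ℝ) {h : ℝ} (hh : 0 < h) :
    φ' (r + h) - φ' r ≤ (φ (r + 2 * h) - φ r - φ' r * (2 * h)) / h := by
  have h₁ := hφ.add_mul_sub_le_of_hasDerivWithinAt_Ioi (hφ' (r + h)) (r + 2 * h)
  have h₂ := hφ.add_mul_sub_le_of_hasDerivWithinAt_Ioi (hφ' r) (r + h)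
  rw [le_div_iff₀ hh]
  linarith

lemma mem_Icc_rightDeriv_of_forall_mul_sub_le {φ φ' : ℝ → ℝ} (hφ : ConvexOn ℝ univ φ)
    (hφ' : ∀ x, HasDerivWithinAt φ (φ' x) (Ioi x) x) {x y r w : ℝ}
    (hx : ∀ z, z * y - φ z ≤ x * y - φ x) (hrx : r < x) (hxw : x < w) :
    y ∈ Icc (φ' r) (φ' w) := by
  have hr := hφ.le_slope_of_hasDerivWithinAt_Ioi trivial trivial hrx (hφ' r)
  have hw := hφ.slope_le_of_hasDerivWithinAt_Ioi hxw (hφ' w)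
  rw [slope_def_field] at hr hw
  rw [le_div_iff₀ (sub_pos.2 hrx)] at hr
  rw [div_le_iff₀ (sub_pos.2 hxw)] at hw
  constructor <;> nlinarith [hx r, hx w]

lemma volume_preimage_Ioo_le {φ φ' s : ℝ → ℝ} (hφ : ConvexOn ℝ univ φ)
    (hφ' : ∀ x, HasDerivWithinAt φ (φ' x) (Ioi x) x)
    (hs : ∀ y z, z * y - φ z ≤ s y * y - φ (s y)) (r : ℝ) {h : ℝ} (hh : 0 < h) :
    volume (s ⁻¹' Ioo r (r + h)) ≤ .ofReal ((φ (r + 2 * h) - φ r - φ' r * (2 * h)) / h) :=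
  calc volume (s ⁻¹' Ioo r (r + h))
      ≤ volume (Icc (φ' r) (φ' (r + h))) :=
        measure_mono fun y hy => hφ.mem_Icc_rightDeriv_of_forall_mul_sub_le hφ' (hs y) hy.1 hy.2
    _ = .ofReal (φ' (r + h) - φ' r) := Real.volume_Icc
    _ ≤ _ := ENNReal.ofReal_le_ofReal (hφ.rightDeriv_add_sub_le hφ' r hh)

end ConvexOn

lemma exists_forall_mul_sub_le {φ ψ : ℝ → ℝ} (hφ : Continuous φ)
    (hψ : ∀ y, IsLUB {z | ∃ x, z = x * y - φ x} (ψ y)) (y : ℝ) :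
    ∃ x, ∀ z, z * y - φ z ≤ x * y - φ x := by
  have hle (y' z : ℝ) : z * y' - φ z ≤ ψ y' := (hψ y').1 ⟨z, rfl⟩
  refine (by fun_prop : Continuous fun z => z * y - φ z).exists_forall_ge ?_
  rw [cocompact_eq_atBot_atTop, tendsto_sup]
  constructor
  · refine tendsto_atBot_mono (fun z => ?_)
      (tendsto_atBot_add_const_left _ (ψ (y - 1)) tendsto_id)
    have := hle (y - 1) z
    show _ ≤ ψ (y - 1) + z
    linarith
  · refine tendsto_atBot_mono (fun z => ?_)
      (tendsto_atBot_add_const_left _ (ψ (y + 1)) tendsto_neg_atTop_atBot)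
    have := hle (y + 1) z
    show _ ≤ ψ (y + 1) + -z
    linarith

lemma hasDerivAt_of_forall_mul_sub_le_sub_le {f g : ℝ → ℝ} {y : ℝ} (hg : ContinuousAt g y)
    (hlo : ∀ z, g y * (z - y) ≤ f z - f y) (hhi : ∀ z, f z - f y ≤ g z * (z - y)) :
    HasDerivAt f (g y) y := by
  rw [hasDerivAt_iff_isLittleO, Asymptotics.isLittleO_iff]
  intro c hc
  filter_upwards [Metric.eventually_nhds_iff.2 (Metric.continuousAt_iff.1 hg c hc)] with z hz
  rw [Real.dist_eq] at hz
  have hrem : 0 ≤ f z - f y - (z - y) • g y := by rw [smul_eq_mul]; linarith [hlo z]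
  rw [Real.norm_of_nonneg hrem, Real.norm_eq_abs, smul_eq_mul]
  calc f z - f y - (z - y) * g y ≤ (g z - g y) * (z - y) := by linarith [hhi z]
    _ ≤ |g z - g y| * |z - y| := (le_abs_self _).trans (abs_mul _ _).le
    _ ≤ c * |z - y| := by gcongr

lemma monotone_of_forall_mul_sub_le {φ s : ℝ → ℝ}
    (hs : ∀ y z, z * y - φ z ≤ s y * y - φ (s y)) :
    Monotone s := by
  intro y₁ y₂ hy
  rcases hy.eq_or_lt with rfl | hy
  · rfl
  by_contra! h
  nlinarith [hs y₁ (s y₂), hs y₂ (s y₁)]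

lemma StrictConvexOn.eq_of_forall_mul_sub_le {φ : ℝ → ℝ} (hφ : StrictConvexOn ℝ univ φ)
    {y x₁ x₂ : ℝ} (h₁ : ∀ z, z * y - φ z ≤ x₁ * y - φ x₁)
    (h₂ : ∀ z, z * y - φ z ≤ x₂ * y - φ x₂) :
    x₁ = x₂ := by
  refine (hφ.sub_concaveOn (((LinearMap.mul ℝ ℝ).flip y).concaveOn convex_univ)).eq_of_isMinOn
    (isMinOn_iff.2 fun z _ => ?_) (isMinOn_iff.2 fun z _ => ?_) trivial trivial
  · simp only [Pi.sub_apply, LinearMap.flip_apply, LinearMap.mul_apply']; linarith [h₁ z]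
  · simp only [Pi.sub_apply, LinearMap.flip_apply, LinearMap.mul_apply']; linarith [h₂ z]

lemma hasDerivAt_of_isLUB_of_forall_mul_sub_le {φ ψ s : ℝ → ℝ}
    (hψ : ∀ y, IsLUB {z | ∃ x, z = x * y - φ x} (ψ y))
    (hs : ∀ y z, z * y - φ z ≤ s y * y - φ (s y)) (hcont : Continuous s) (y : ℝ) :
    HasDerivAt ψ (s y) y := by
  have hval (y : ℝ) : ψ y = s y * y - φ (s y) :=
    (hψ y).unique (IsGreatest.isLUB ⟨⟨s y, rfl⟩, fun _ ⟨x, hx⟩ => hx ▸ hs y x⟩)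
  have hle (x y : ℝ) : x * y - φ x ≤ ψ y := (hψ y).1 ⟨x, rfl⟩
  refine hasDerivAt_of_forall_mul_sub_le_sub_le hcont.continuousAt (fun z => ?_) (fun z => ?_)
  · linarith [hle (s y) z, hval y]
  · linarith [hle (s z) y, hval z]

lemma StieltjesFunction.measure_preimage_singleton_eq_zero (F : StieltjesFunction ℝ)
    (hcont : Continuous F) (hsurj : Function.Surjective F) (v : ℝ) :
    F.measure (F ⁻¹' {v}) = 0 := by
  rcases (F ⁻¹' {v}).eq_empty_or_nonempty with hempty | hne
  · simp [hempty]
  obtain ⟨a, ha⟩ := hsurj (v - 1)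
  obtain ⟨b, hb⟩ := hsurj (v + 1)
  have hsub : F ⁻¹' {v} ⊆ Icc a b := fun y (hy : F y = v) =>
    ⟨(F.mono.reflect_lt (show F a < F y by linarith)).le,
      (F.mono.reflect_lt (show F y < F b by linarith)).le⟩
  have hcpt : IsCompact (F ⁻¹' {v}) :=
    isCompact_Icc.of_isClosed_subset (isClosed_singleton.preimage hcont) hsub
  obtain ⟨m, hm, hmin⟩ := hcpt.exists_isLeast hne
  obtain ⟨M, hM, hmax⟩ := hcpt.exists_isGreatest hne
  refine measure_mono_null (t := Icc m M) (fun y hy => ⟨hmin hy, hmax hy⟩) ?_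
  rw [F.measure_Icc, hcont.continuousWithinAt.leftLim_eq, show F M = v from hM,
    show F m = v from hm, sub_self, ENNReal.ofReal_zero]

lemma Monotone.ae_hasDerivAt_zero_of_volume_preimage {f : ℝ → ℝ} (hmono : Monotone f)
    (hcont : Continuous f) (hsurj : Function.Surjective f) {A : Set ℝ} (hA : Aᶜ.Countable)
    (hnull : volume (f ⁻¹' A) = 0) : ∀ᵐ y, HasDerivAt f 0 y := by
  let F : StieltjesFunction ℝ := ⟨f, hmono, fun _ => hcont.continuousWithinAt⟩
  have hF : F.measure (f ⁻¹' Aᶜ) = 0 := by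
    rw [← biUnion_of_singleton Aᶜ, preimage_iUnion₂, measure_biUnion_null_iff hA]
    exact fun v _ => F.measure_preimage_singleton_eq_zero hcont hsurj v
  have hsing : F.measure ⟂ₘ volume :=
    ⟨f ⁻¹' Aᶜ, hcont.measurable hA.measurableSet, hF, by rwa [preimage_compl, compl_compl]⟩
  filter_upwards [F.ae_hasDerivAt, (Measure.rnDeriv_eq_zero _ _).2 hsing] with y hy hy0
  simpa [hy0] using hy

structure FareyPair where
  a : ℤ
  b : ℕ
  c : ℤ
  d : ℕ
  b_pos : 0 < b
  d_pos : 0 < d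
  det : c * b - a * d = 1

namespace FareyPair

def Brackets (β : FareyPair) (x : ℝ) : Prop := β.a < x * β.b ∧ x * β.d < β.c

def neg (β : FareyPair) : FareyPair :=
  ⟨-β.c, β.d, -β.a, β.b, β.d_pos, β.b_pos, by linear_combination β.det⟩

lemma Brackets.neg {β : FareyPair} {x : ℝ} (h : β.Brackets x) : β.neg.Brackets (-x) := by
  simp only [Brackets, FareyPair.neg, Int.cast_neg] at h ⊢
  constructor <;> linarith [h.1, h.2]

def shift (β : FareyPair) (k : ℕ) : FareyPair :=
  ⟨β.a + k * β.c, β.b + k * β.d, β.a + (k + 1) * β.c, β.b + (k + 1) * β.d,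
    by have := β.b_pos; positivity, by have := β.b_pos; positivity,
    by push_cast; linear_combination β.det⟩

lemma exists_shift_brackets {β : FareyPair} {x : ℝ} (hx : Irrational x) (h : β.Brackets x) :
    ∃ k, (β.shift k).Brackets x := by
  classical
  have hex : ∃ k : ℕ, x * (β.b + (k + 1) * β.d) < β.a + (k + 1) * β.c := by
    obtain ⟨k, hk⟩ := exists_nat_gt ((x * β.b - β.a) / (β.c - x * β.d))
    refine ⟨k, ?_⟩
    have hc : 0 < β.c - x * β.d := by linarith [h.2]
    rw [div_lt_iff₀ hc] at hk
    linarith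
  -- The first mediant overshooting `x` is preceded by one that, `x` being irrational, falls
  -- strictly below it.
  refine ⟨Nat.find hex, ?_, by simpa [shift] using Nat.find_spec hex⟩
  simp only [shift]
  push_cast
  rcases hk : Nat.find hex with _ | k
  · simpa using h.1
  · have hle := Nat.find_min hex (show k < Nat.find hex by omega)
    push Not at hle
    have hne :
        x * ((β.b + (k + 1) * β.d : ℕ) : ℝ) ≠ ((β.a + (k + 1) * β.c : ℤ) : ℝ) :=
      (hx.mul_natCast (by have := β.b_pos; positivity)).ne_int _
    push_cast at hle hne ⊢
    exact lt_of_le_of_ne hle hne.symm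

lemma exists_brackets_lt_b {β : FareyPair} {x : ℝ} (hx : Irrational x) (h : β.Brackets x) :
    ∃ β' : FareyPair, β'.Brackets x ∧ β.b < β'.b ∧ β'.b ≤ β'.d := by
  -- Move the right end towards `x` (a shift of the reflected pair), which raises `b` to at
  -- least `b + d`; then move the left end, which leaves `d = b + (previous d)`.
  obtain ⟨k, hk⟩ := exists_shift_brackets hx.neg h.neg
  set γ := (β.neg.shift k).neg
  obtain ⟨l, hl⟩ := exists_shift_brackets hx (by simpa using hk.neg : γ.Brackets x)
  have := β.b_pos
  have := β.d_pos
  refine ⟨γ.shift l, hl, ?_, ?_⟩ <;> simp only [γ, shift, neg]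
  · nlinarith [Nat.zero_le (l * (β.d + k * β.b))]
  · nlinarith

lemma exists_brackets_le_b {x : ℝ} (hx : Irrational x) (N : ℕ) :
    ∃ β : FareyPair, β.Brackets x ∧ N ≤ β.b ∧ β.b ≤ β.d := by
  induction N with
  | zero =>
    refine ⟨⟨⌊x⌋, 1, ⌊x⌋ + 1, 1, one_pos, one_pos, by ring⟩, ⟨?_, ?_⟩,
      Nat.zero_le _, le_rfl⟩
    · simpa using (Int.floor_le x).lt_of_ne (hx.ne_int _).symm
    · simp
  | succ N ih =>
    obtain ⟨β, hβ, hN, -⟩ := ih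
    obtain ⟨β', hβ', hlt, hle⟩ := exists_brackets_lt_b hx hβ
    exact ⟨β', hβ', by omega, hle⟩

lemma gcd_eq_one (β : FareyPair) : Int.gcd β.a β.b = 1 :=
  Int.isCoprime_iff_gcd_eq_one.mp ⟨-β.d, β.c, by linear_combination β.det⟩

lemma sub_lt_one_div_sq {β : FareyPair} {x : ℝ} (h : β.Brackets x) (hbd : β.b ≤ β.d) :
    x - β.a / β.b < 1 / (β.b : ℝ) ^ 2 := by
  have hb : (0 : ℝ) < β.b := by exact_mod_cast β.b_pos
  have hbd' : (β.b : ℝ) ≤ β.d := by exact_mod_cast hbd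
  have hdet : (β.c : ℝ) * β.b - β.a * β.d = 1 := by exact_mod_cast β.det
  have hx : 0 < x * β.b - β.a := sub_pos.2 h.1
  have key : (x * β.b - β.a) * β.b < 1 := by
    nlinarith [h.2, mul_le_mul_of_nonneg_left hbd' hx.le]
  rw [sub_div' hb.ne', div_lt_div_iff₀ hb (by positivity)]
  nlinarith

end FareyPair

theorem Irrational.exists_gcd_eq_one_sub_pos_lt {x : ℝ} (hx : Irrational x) (N : ℕ) :
    ∃ p : ℤ, ∃ q : ℕ, N ≤ q ∧ Int.gcd p q = 1 ∧
      0 < x - p / q ∧ x - p / q < 1 / (q : ℝ) ^ 2 := by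
  obtain ⟨β, hβ, hN, hbd⟩ := FareyPair.exists_brackets_le_b hx N
  have hb : (0 : ℝ) < β.b := by exact_mod_cast β.b_pos
  refine ⟨β.a, β.b, hN, β.gcd_eq_one, ?_, β.sub_lt_one_div_sq hβ hbd⟩
  rw [sub_pos, div_lt_iff₀ hb]
  exact hβ.1

lemma Int.card_Icc_ceil_floor_le {α β : ℝ} (h : α ≤ β) :
    ((Finset.Icc ⌈α⌉ ⌊β⌋).card : ℝ) ≤ β - α + 1 := by
  have hle : ⌈α⌉ ≤ ⌊β⌋ + 1 := by
    have : (⌈α⌉ : ℝ) < ⌊β⌋ + 2 := by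
      linarith [Int.ceil_lt_add_one α, Int.lt_floor_add_one β]
    have : ⌈α⌉ < ⌊β⌋ + 2 := by exact_mod_cast this
    omega
  have hcard : (((Finset.Icc ⌈α⌉ ⌊β⌋).card : ℤ) : ℝ) = ⌊β⌋ + 1 - ⌈α⌉ := by
    rw [Int.card_Icc_of_le _ _ hle]; push_cast; ring
  rw [Int.cast_natCast] at hcard
  linarith [Int.floor_le β, Int.le_ceil α]

def rightApproxSet (w : ℝ) (q : ℕ) : Set ℝ :=
  ⋃ (p : ℤ) (_ : Int.gcd p q = 1), Ioo (p / q : ℝ) (p / q + w)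

lemma Irrational.frequently_mem_rightApproxSet {x : ℝ} (hx : Irrational x) {ν : ℝ}
    (hν : ν < 1) :
    ∃ᶠ q : ℕ in atTop, x ∈ rightApproxSet (1 / (2 * (q : ℝ) ^ (1 + ν))) q := by
  obtain ⟨N₀, hN₀⟩ := eventually_atTop.1 <|
    ((tendsto_rpow_atTop (sub_pos.2 hν)).comp tendsto_natCast_atTop_atTop).eventually_ge_atTop 2
  refine frequently_atTop.2 fun N => ?_
  obtain ⟨p, q, hq, hpq, hpos, hlt⟩ := hx.exists_gcd_eq_one_sub_pos_lt (max N (max N₀ 1))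
  have hq0 : (0 : ℝ) < q := by exact_mod_cast (show 0 < q by omega)
  have h2 : (2 : ℝ) ≤ (q : ℝ) ^ (1 - ν) := hN₀ q (by omega)
  have hsq : (q : ℝ) ^ 2 = (q : ℝ) ^ (1 + ν) * (q : ℝ) ^ (1 - ν) := by
    rw [← Real.rpow_add hq0, show 1 + ν + (1 - ν) = (2 : ℕ) by ring, Real.rpow_natCast]
  have hwin : 1 / (q : ℝ) ^ 2 ≤ 1 / (2 * (q : ℝ) ^ (1 + ν)) := by
    rw [hsq, mul_comm 2]
    gcongr
  refine ⟨q, by omega, mem_iUnion₂.2 ⟨p, hpq, by constructor <;> linarith⟩⟩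

lemma volume_Icc_inter_preimage_rightApproxSet_le {s : ℝ → ℝ} (hs : Monotone s) {q : ℕ}
    (hq : 0 < q) {w B : ℝ} (hw : w ≤ 1)
    (hB : ∀ p : ℤ, Int.gcd p q = 1 →
      volume (s ⁻¹' Ioo (p / q : ℝ) (p / q + w)) ≤ .ofReal B)
    {a b : ℝ} (hab : a ≤ b) :
    volume (Icc a b ∩ s ⁻¹' rightApproxSet w q) ≤ .ofReal ((s b - s a + 2) * (q * B)) := by
  have hq' : (0 : ℝ) < q := by exact_mod_cast hq
  have hsab : s a ≤ s b := hs hab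
  set P := (Finset.Icc ⌈q * (s a - 1)⌉ ⌊q * s b⌋).filter fun p : ℤ => Int.gcd p q = 1
  have hsub : Icc a b ∩ s ⁻¹' rightApproxSet w q ⊆
      ⋃ p ∈ P, s ⁻¹' Ioo (p / q : ℝ) (p / q + w) := by
    rintro y ⟨hy, hsy⟩
    obtain ⟨p, hp, hpy⟩ := mem_iUnion₂.1 hsy
    refine mem_iUnion₂.2
      ⟨p, Finset.mem_filter.2 ⟨Int.cast_mem_Icc_iff.1 ⟨?_, ?_⟩, hp⟩, hpy⟩
    · have hsy := hs hy.1
      have hlt := hpy.2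
      rw [← sub_lt_iff_lt_add, lt_div_iff₀ hq'] at hlt
      nlinarith
    · have hsy := hs hy.2
      have hlt := hpy.1
      rw [div_lt_iff₀ hq'] at hlt
      nlinarith
  have hcard : (P.card : ℝ) ≤ (s b - s a + 2) * q := by
    refine (Nat.cast_le.2 (Finset.card_filter_le _ _)).trans ?_
    refine (Int.card_Icc_ceil_floor_le (by nlinarith)).trans ?_
    nlinarith [show (1 : ℝ) ≤ q by exact_mod_cast hq]
  calc volume (Icc a b ∩ s ⁻¹' rightApproxSet w q)
      ≤ ∑ p ∈ P, volume (s ⁻¹' Ioo (p / q : ℝ) (p / q + w)) :=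
        (measure_mono hsub).trans (measure_biUnion_finset_le _ _)
    _ ≤ P.card • ENNReal.ofReal B :=
        Finset.sum_le_card_nsmul _ _ _ fun p hp => hB p (Finset.mem_filter.1 hp).2
    _ ≤ .ofReal ((s b - s a + 2) * (q * B)) := by
        rw [nsmul_eq_mul, ← mul_assoc, ENNReal.ofReal_mul (by positivity)]
        rw [← ENNReal.ofReal_natCast]
        gcongr

lemma volume_preimage_setOf_frequently_rightApproxSet {s : ℝ → ℝ} (hs : Monotone s)
    {w B : ℕ → ℝ} (hB : Summable fun q : ℕ => q * B q)
    (hvol : ∀ᶠ q : ℕ in atTop, w q ≤ 1 ∧ ∀ p : ℤ, Int.gcd p q = 1 →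
      volume (s ⁻¹' Ioo (p / q : ℝ) (p / q + w q)) ≤ .ofReal (B q)) :
    volume (s ⁻¹' {x | ∃ᶠ q : ℕ in atTop, x ∈ rightApproxSet (w q) q}) = 0 := by
  obtain ⟨Q, hQ⟩ := eventually_atTop.1 (hvol.and (eventually_gt_atTop 0))
  have hcover : s ⁻¹' {x | ∃ᶠ q : ℕ in atTop, x ∈ rightApproxSet (w q) q} ⊆
      ⋃ n : ℕ, {y | ∃ᶠ q : ℕ in atTop,
        Q ≤ q ∧ y ∈ Icc (-n : ℝ) n ∩ s ⁻¹' rightApproxSet (w q) q} := by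
    intro y hy
    obtain ⟨n, hn⟩ := exists_nat_ge |y|
    refine mem_iUnion.2 ⟨n, ((hy.and_eventually (eventually_ge_atTop Q)).mono ?_)⟩
    exact fun q ⟨hq, hQq⟩ => ⟨hQq, abs_le.1 hn, hq⟩
  refine measure_mono_null hcover
    (measure_iUnion_null fun n => measure_setOfPred_frequently_eq_zero ?_)
  have hn : (-n : ℝ) ≤ n := by linarith [(Nat.cast_nonneg n : (0 : ℝ) ≤ n)]
  refine ne_top_of_le_ne_top ((hB.mul_left (s n - s (-n) + 2)).tsum_ofReal_ne_top)
    (ENNReal.tsum_le_tsum fun q => ?_)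
  by_cases hq : Q ≤ q
  · obtain ⟨⟨hw, hvol⟩, hq0⟩ := hQ q hq
    simp only [hq, true_and, ofPred_mem_eq]
    exact volume_Icc_inter_preimage_rightApproxSet_le hs hq0 hw hvol hn
  · simp [hq]

lemma volume_preimage_Ioo_le_of_flat {φ φ' s U : ℝ → ℝ} (hφ : ConvexOn ℝ univ φ)
    (hφ' : ∀ x, HasDerivWithinAt φ (φ' x) (Ioi x) x)
    (hs : ∀ y z, z * y - φ z ≤ s y * y - φ (s y)) {r ν : ℝ} {q : ℕ} (hq : 0 < q)
    (hqν : 4 < (q : ℝ) ^ ν)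
    (hflat : ∀ x ∈ Ioo r (r + 1 / (4 * q)), φ x - φ r - φ' r * (x - r) < U (x - r)) :
    volume (s ⁻¹' Ioo r (r + 1 / (2 * (q : ℝ) ^ (1 + ν)))) ≤
      .ofReal (2 * (q : ℝ) ^ (1 + ν) * U (1 / (q : ℝ) ^ (1 + ν))) := by
  have hq' : (0 : ℝ) < q := by exact_mod_cast hq
  have hpow : (q : ℝ) ^ (1 + ν) = q * q ^ ν := by rw [Real.rpow_add hq', Real.rpow_one]
  set h := 1 / (2 * (q : ℝ) ^ (1 + ν)) with hh_def
  have hh : 0 < h := by positivity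
  have h2h : 2 * h = 1 / (q : ℝ) ^ (1 + ν) := by rw [hh_def]; field_simp
  have hsmall : 2 * h < 1 / (4 * q) := by
    rw [h2h, hpow]
    exact one_div_lt_one_div_of_lt (by positivity) (by nlinarith)
  calc volume (s ⁻¹' Ioo r (r + h))
      ≤ .ofReal ((φ (r + 2 * h) - φ r - φ' r * (2 * h)) / h) :=
        hφ.volume_preimage_Ioo_le hφ' hs r hh
    _ ≤ .ofReal (U (2 * h) / h) := by
        gcongr
        simpa using (hflat (r + 2 * h) ⟨by linarith, by linarith⟩).le
    _ = _ := by rw [h2h, hh_def]; congr 1; field_simp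

lemma volume_preimage_setOf_frequently_rightApproxSet_of_flat {φ φ' s : ℝ → ℝ}
    (hφ : ConvexOn ℝ univ φ) (hφ' : ∀ x, HasDerivWithinAt φ (φ' x) (Ioi x) x)
    (hs : ∀ y z, z * y - φ z ≤ s y * y - φ (s y)) {ν : ℝ} (hν : 0 < ν)
    {u : ℕ → ℝ → ℝ} (hflat : ∀ (p : ℤ) (q : ℕ), 0 < q → Int.gcd p q = 1 →
      ∀ x ∈ Ioo (p / q : ℝ) (p / q + 1 / (4 * q)),
        φ x - φ (p / q) - φ' (p / q) * (x - p / q) < u q (x - p / q))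
    (hsum : Summable fun q : ℕ => (q : ℝ) ^ (2 + ν) * u q (1 / (q : ℝ) ^ (1 + ν))) :
    volume (s ⁻¹' {x | ∃ᶠ q : ℕ in atTop,
      x ∈ rightApproxSet (1 / (2 * (q : ℝ) ^ (1 + ν))) q}) = 0 := by
  refine volume_preimage_setOf_frequently_rightApproxSet (monotone_of_forall_mul_sub_le hs)
    (B := fun q => 2 * (q : ℝ) ^ (1 + ν) * u q (1 / (q : ℝ) ^ (1 + ν))) ?_ ?_
  · refine (hsum.mul_left 2).congr fun q => ?_
    rw [show (2 : ℝ) + ν = 1 + (1 + ν) by ring,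
      Real.rpow_add' (Nat.cast_nonneg q) (by linarith), Real.rpow_one]
    ring
  filter_upwards [eventually_gt_atTop 0, ((tendsto_rpow_atTop hν).comp
    tendsto_natCast_atTop_atTop).eventually_gt_atTop 4] with q hq hqν
  refine ⟨(div_le_one (by positivity)).2 ?_, fun p hpq =>
    volume_preimage_Ioo_le_of_flat hφ hφ' hs hq hqν (hflat p q hq hpq)⟩
  linarith [Real.one_le_rpow (Nat.one_le_cast.2 hq) (by linarith : (0 : ℝ) ≤ 1 + ν)]

theorem stmt7_general (φ φp ψ : ℝ → ℝ) (hφ : StrictConvexOn ℝ Set.univ φ)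
    (hp : ∀ x, Tendsto (fun t => (φ (x + t) - φ x) / t) (𝓝[>] 0) (𝓝 (φp x)))
    (ν : ℝ) (hν : ν ∈ Set.Ioo (0:ℝ) 1) (u : ℕ → ℝ → ℝ)
    (hflat : ∀ (p : ℤ) (q : ℕ), 0 < q → Int.gcd p (q:ℤ) = 1 →
      ∀ x ∈ Set.Ioo ((p:ℝ)/(q:ℝ)) ((p:ℝ)/(q:ℝ) + 1/(4*(q:ℝ))),
        0 < φ x - φ ((p:ℝ)/(q:ℝ)) - φp ((p:ℝ)/(q:ℝ)) * (x - (p:ℝ)/(q:ℝ)) ∧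
        φ x - φ ((p:ℝ)/(q:ℝ)) - φp ((p:ℝ)/(q:ℝ)) * (x - (p:ℝ)/(q:ℝ))
          < u q (x - (p:ℝ)/(q:ℝ)))
    (hsum : Summable (fun q : ℕ => (q:ℝ)^((2:ℝ)+ν) * u q (1/(q:ℝ)^((1:ℝ)+ν))))
    (hψ : ∀ y, IsLUB {z | ∃ x, z = x * y - φ x} (ψ y)) :
    Differentiable ℝ ψ ∧ Continuous (deriv ψ) ∧
    (∃ y₁ y₂, deriv ψ y₁ ≠ deriv ψ y₂) ∧
    (∀ᵐ y ∂(volume : Measure ℝ), HasDerivAt (deriv ψ) 0 y) := by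
  have hφc := hφ.convexOn
  have hφ' (x : ℝ) : HasDerivWithinAt φ (φp x) (Ioi x) x :=
    hasDerivWithinAt_Ioi_of_tendsto_slope (hp x)
  choose s hs using
    exists_forall_mul_sub_le (continuousOn_univ.1 (hφc.continuousOn isOpen_univ)) hψ
  have hsφ (x : ℝ) : s (φp x) = x :=
    hφ.eq_of_forall_mul_sub_le (hs _) fun z => by
      linarith [hφc.add_mul_sub_le_of_hasDerivWithinAt_Ioi (hφ' x) z]
  have hsurj : Function.Surjective s := fun x => ⟨φp x, hsφ x⟩
  have hmono := monotone_of_forall_mul_sub_le hs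
  have hcont := hmono.continuous_of_surjective hsurj
  have hψ' := hasDerivAt_of_isLUB_of_forall_mul_sub_le hψ hs hcont
  have hderiv : deriv ψ = s := funext fun y => (hψ' y).deriv
  refine ⟨fun y => (hψ' y).differentiableAt, hderiv ▸ hcont,
    ⟨φp 0, φp 1, by simp [hderiv, hsφ]⟩, hderiv ▸ ?_⟩
  refine hmono.ae_hasDerivAt_zero_of_volume_preimage hcont hsurj ?_
    (volume_preimage_setOf_frequently_rightApproxSet_of_flat hφc hφ' hs hν.1
      (fun p q hq hpq x hx => (hflat p q hq hpq x hx).2) hsum)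
  refine (countable_range ((↑) : ℚ → ℝ)).mono fun x hx => ?_
  by_contra hirr
  exact hx (Irrational.frequently_mem_rightApproxSet hirr hν.2)

theorem stmt7 (φ φp ψ : ℝ → ℝ) (hφ : StrictConvexOn ℝ Set.univ φ)
    (hp : ∀ x, Tendsto (fun t => (φ (x + t) - φ x) / t) (𝓝[>] 0) (𝓝 (φp x)))
    (ν : ℝ) (hν : ν ∈ Set.Ioo (0:ℝ) 1) (u : ℕ → ℝ → ℝ)
    (hu_pos : ∀ q x, 0 < x → 0 < u q x)
    (hflat : ∀ (p : ℤ) (q : ℕ), 0 < q → Int.gcd p (q:ℤ) = 1 →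
      ∀ x ∈ Set.Ioo ((p:ℝ)/(q:ℝ)) ((p:ℝ)/(q:ℝ) + 1/(4*(q:ℝ))),
        0 < φ x - φ ((p:ℝ)/(q:ℝ)) - φp ((p:ℝ)/(q:ℝ)) * (x - (p:ℝ)/(q:ℝ)) ∧
        φ x - φ ((p:ℝ)/(q:ℝ)) - φp ((p:ℝ)/(q:ℝ)) * (x - (p:ℝ)/(q:ℝ))
          < u q (x - (p:ℝ)/(q:ℝ)))
    (hsum : Summable (fun q : ℕ => (q:ℝ)^((2:ℝ)+ν) * u q (1/(q:ℝ)^((1:ℝ)+ν))))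
    (hψ : ∀ y, IsLUB {z | ∃ x, z = x * y - φ x} (ψ y)) :
    Differentiable ℝ ψ ∧ Continuous (deriv ψ) ∧
    (∃ y₁ y₂, deriv ψ y₁ ≠ deriv ψ y₂) ∧
    (∀ᵐ y ∂(volume : Measure ℝ), HasDerivAt (deriv ψ) 0 y) :=
  stmt7_general φ φp ψ hφ hp ν hν u hflat hsum hψ
end

section
/- Let φ: ℝ → ℝ be strictly convex with superlinear growth, ψ its convex conjugate, and P ⊂ ℝ a set of positive Lebesgue measure such that for every x₀ ∈ P there exist c(x₀), δ(x₀) > 0 with φ(x) − φ(x₀) − y₀(x − x₀) ≥ c(x₀)|x − x₀|² for all x ∈ B(x₀, δ(x₀)) and all y₀ ∈ D⁻φ(x₀). Then for every y₀ with Dψ(y₀) ∈ P, limsup_{y → y₀} |Dψ(y) − Dψ(y₀)|/|y − y₀| < ∞. -/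
open Filter Set Topology MeasureTheory

/-- The subdifferential of `φ` at `x`. -/
def subdiff (φ : ℝ → ℝ) (x : ℝ) : Set ℝ :=
  {y | ∀ x', φ x + y * (x' - x) ≤ φ x'}

/-!
By superlinear growth every slope `y` is a subgradient of `φ` at some point `X y`, and by strict
convexity this point is unique. The map `X` is monotone and (convex functions on `ℝ` having
subgradients everywhere) surjective, hence continuous. Since `X y` is a subgradient of the
conjugate `ψ` at `y`, the slopes of `ψ` are squeezed between values of `X`, so `ψ` is
differentiable with `ψ' = X`. Finally, if `x₀ = X y₀ ∈ P`, comparing the quadratic lower bound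
at `x₀` with the subgradient inequality at `X y` on the segment `[x₀, X y]` gives
`c |X y - x₀| ≤ |y - y₀|` for `y` near `y₀`.
-/

section Subdifferential

variable {φ : ℝ → ℝ}

lemma ConvexOn.rightDeriv_mem_subdiff (hφ : ConvexOn ℝ univ φ) (x : ℝ) :
    derivWithin φ (Ioi x) x ∈ subdiff φ x := by
  intro z
  rcases lt_trichotomy z x with hzx | rfl | hxz
  · have h1 := hφ.slope_le_leftDeriv_of_mem_interior (mem_univ z) (by simp) hzx
    have h2 := hφ.leftDeriv_le_rightDeriv_of_mem_interior (x := x) (by simp)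
    rw [slope_def_field, div_le_iff₀ (sub_pos.2 hzx)] at h1
    nlinarith
  · simp
  · have h := hφ.rightDeriv_le_slope_of_mem_interior (by simp) (mem_univ z) hxz
    rw [slope_def_field, le_div_iff₀ (sub_pos.2 hxz)] at h
    linarith

lemma tendsto_sub_mul_cobounded_of_superlinear
    (hsl : Tendsto (fun x => φ x / |x|) (Bornology.cobounded ℝ) atTop) (y : ℝ) :
    Tendsto (fun x => φ x - x * y) (Bornology.cobounded ℝ) atTop := by
  have hprod : Tendsto (fun x => |x| * (φ x / |x| - |y|)) (Bornology.cobounded ℝ) atTop := by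
    refine Tendsto.atTop_mul_atTop₀ ?_ (tendsto_atTop_add_const_right _ _ hsl)
    exact tendsto_norm_cobounded_atTop.congr Real.norm_eq_abs
  refine tendsto_atTop_mono' _ ?_ hprod
  filter_upwards [Bornology.eventually_ne_cobounded 0] with x hx
  rw [mul_sub, mul_div_cancel₀ _ (abs_ne_zero.2 hx)]
  have := le_abs_self (x * y)
  rw [abs_mul] at this
  linarith

lemma exists_mem_subdiff_of_superlinear (hφ : Continuous φ)
    (hsl : Tendsto (fun x => φ x / |x|) (Bornology.cobounded ℝ) atTop) (y : ℝ) :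
    ∃ x, y ∈ subdiff φ x := by
  have hlim := tendsto_sub_mul_cobounded_of_superlinear hsl y
  rw [Metric.cobounded_eq_cocompact] at hlim
  have hcont : Continuous fun x => φ x - x * y := by fun_prop
  obtain ⟨x, hx⟩ := hcont.exists_forall_le hlim
  exact ⟨x, fun x' => by linarith [hx x']⟩

lemma StrictConvexOn.eq_of_mem_subdiff (hφ : StrictConvexOn ℝ univ φ) {x x' y : ℝ}
    (h : y ∈ subdiff φ x) (h' : y ∈ subdiff φ x') : x = x' := by
  by_contra hne
  have hmid := hφ.2 (mem_univ x) (mem_univ x') hne (by norm_num : (0 : ℝ) < 1 / 2)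
    (by norm_num : (0 : ℝ) < 1 / 2) (by norm_num)
  have hsub := h ((1 / 2 : ℝ) • x + (1 / 2 : ℝ) • x')
  have hsub' := h' x
  simp only [smul_eq_mul] at hmid hsub
  nlinarith

lemma monotone_of_forall_mem_subdiff {X : ℝ → ℝ} (hX : ∀ y, y ∈ subdiff φ (X y)) :
    Monotone X := by
  intro y y' hyy'
  rcases hyy'.eq_or_lt with rfl | hlt
  · exact le_rfl
  by_contra! h
  have h1 := hX y (X y')
  have h2 := hX y' (X y)
  nlinarith [mul_pos (sub_pos.2 hlt) (sub_pos.2 h)]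

lemma StrictConvexOn.continuous_of_forall_mem_subdiff (hφ : StrictConvexOn ℝ univ φ)
    {X : ℝ → ℝ} (hX : ∀ y, y ∈ subdiff φ (X y)) : Continuous X :=
  (monotone_of_forall_mem_subdiff hX).continuous_of_surjective fun x =>
    ⟨_, hφ.eq_of_mem_subdiff (hX _) (hφ.convexOn.rightDeriv_mem_subdiff x)⟩

lemma ConvexOn.sub_le_mul_sub_of_mem_segment (hφ : ConvexOn ℝ univ φ) {x₀ x y z : ℝ}
    (hy : y ∈ subdiff φ x) (hz : z ∈ segment ℝ x₀ x) : φ z - φ x₀ ≤ y * (z - x₀) := by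
  obtain ⟨a, b, ha, hb, hab, rfl⟩ := hz
  have hconv := hφ.2 (mem_univ x₀) (mem_univ x) ha hb hab
  have hx := mul_le_mul_of_nonneg_left (hy x₀) hb
  obtain rfl : a = 1 - b := by linarith
  simp only [smul_eq_mul] at hconv ⊢
  nlinarith

end Subdifferential

lemma mem_subdiff_conj {φ ψ : ℝ → ℝ} (hψ : ∀ y, IsLUB {z | ∃ x, z = x * y - φ x} (ψ y))
    {x y : ℝ} (h : y ∈ subdiff φ x) : x ∈ subdiff ψ y := by
  have hle : ψ y ≤ x * y - φ x := (hψ y).2 <| by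
    rintro _ ⟨u, rfl⟩
    linarith [h u]
  intro y'
  linarith [(hψ y').1 ⟨x, rfl⟩]

/-- The remainder of the tangent line is squeezed between `0` and `(X y' - X y) * (y' - y)`. -/
lemma hasDerivAt_of_forall_mem_subdiff {g X : ℝ → ℝ} (hX : ∀ y, X y ∈ subdiff g y) {y : ℝ}
    (hc : ContinuousAt X y) : HasDerivAt g (X y) y := by
  rw [hasDerivAt_iff_isLittleO]
  have hsmall : (fun y' => (X y' - X y) * (y' - y)) =o[𝓝 y] fun y' => y' - y := by
    have h0 : (fun y' => X y' - X y) =o[𝓝 y] fun _ => (1 : ℝ) :=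
      (Asymptotics.isLittleO_one_iff ℝ).2 (by simpa using hc.sub_const (X y))
    simpa using h0.mul_isBigO (Asymptotics.isBigO_refl (fun y' => y' - y) _)
  refine Asymptotics.IsBigO.trans_isLittleO
    (Asymptotics.IsBigO.of_bound 1 (Eventually.of_forall fun y' => ?_)) hsmall
  have h1 := hX y y'
  have h2 := hX y' y
  rw [one_mul, Real.norm_eq_abs, Real.norm_eq_abs, smul_eq_mul]
  exact abs_le_abs_of_nonneg (by linarith) (by nlinarith)

section StrongConvexity

variable {φ : ℝ → ℝ} {c δ x₀ y₀ x y : ℝ}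

lemma ConvexOn.mul_abs_sub_le_of_mem_segment (hφ : ConvexOn ℝ univ φ)
    (hstrong : ∀ z ∈ Metric.ball x₀ δ, c * |z - x₀| ^ 2 ≤ φ z - φ x₀ - y₀ * (z - x₀))
    (hy : y ∈ subdiff φ x) {z : ℝ} (hz : z ∈ segment ℝ x₀ x) (hzδ : z ∈ Metric.ball x₀ δ) :
    c * |z - x₀| ≤ |y - y₀| := by
  have hquad : c * |z - x₀| ^ 2 ≤ |y - y₀| * |z - x₀| := by
    calc c * |z - x₀| ^ 2 ≤ φ z - φ x₀ - y₀ * (z - x₀) := hstrong z hzδ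
      _ ≤ (y - y₀) * (z - x₀) := by linarith [hφ.sub_le_mul_sub_of_mem_segment hy hz]
      _ ≤ |y - y₀| * |z - x₀| := by rw [← abs_mul]; exact le_abs_self _
  rcases (abs_nonneg (z - x₀)).eq_or_lt with h0 | hpos
  · rw [← h0, mul_zero]
    exact abs_nonneg _
  · nlinarith

/-- If `x` were at distance `≥ δ` from `x₀`, the point of `[x₀, x]` at a distance
`r ∈ (|y - y₀| / c, δ)` from `x₀` would violate the previous lemma. -/
lemma ConvexOn.mul_abs_sub_le_of_strongly_convex_at (hφ : ConvexOn ℝ univ φ) (hc : 0 < c)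
    (hstrong : ∀ z ∈ Metric.ball x₀ δ, c * |z - x₀| ^ 2 ≤ φ z - φ x₀ - y₀ * (z - x₀))
    (hy : y ∈ subdiff φ x) (hyy₀ : |y - y₀| < c * δ) : c * |x - x₀| ≤ |y - y₀| := by
  by_cases hx : x ∈ Metric.ball x₀ δ
  · exact hφ.mul_abs_sub_le_of_mem_segment hstrong hy (right_mem_segment ℝ x₀ x) hx
  rw [Metric.mem_ball, Real.dist_eq, not_lt] at hx
  obtain ⟨r, hr, hrδ⟩ := exists_between ((div_lt_iff₀' hc).2 hyy₀)
  have hr0 : 0 < r := (div_nonneg (abs_nonneg _) hc.le).trans_lt hr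
  have hxpos : 0 < |x - x₀| := hr0.trans (hrδ.trans_le hx)
  set z := x₀ + (r / |x - x₀|) • (x - x₀)
  have hzr : |z - x₀| = r := by
    rw [add_sub_cancel_left, smul_eq_mul, abs_mul, abs_of_pos (div_pos hr0 hxpos),
      div_mul_cancel₀ _ hxpos.ne']
  have hz : z ∈ segment ℝ x₀ x := by
    rw [segment_eq_image']
    exact ⟨_, ⟨(div_pos hr0 hxpos).le, (div_le_one hxpos).2 (hrδ.trans_le hx).le⟩, rfl⟩
  have hzδ : z ∈ Metric.ball x₀ δ := by rwa [Metric.mem_ball, Real.dist_eq, hzr]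
  have := hφ.mul_abs_sub_le_of_mem_segment hstrong hy hz hzδ
  rw [hzr] at this
  exact absurd ((div_lt_iff₀' hc).1 hr) (not_lt.2 this)

end StrongConvexity

theorem stmt12_general (φ ψ : ℝ → ℝ) (hφ : StrictConvexOn ℝ Set.univ φ)
    (hsl : Tendsto (fun x => φ x / |x|) (Bornology.cobounded ℝ) atTop)
    (hψ : ∀ y, IsLUB {z | ∃ x, z = x * y - φ x} (ψ y))
    (P : Set ℝ)
    (hstrong : ∀ x₀ ∈ P, ∃ c > (0:ℝ), ∃ δ > (0:ℝ), ∀ y₀ ∈ subdiff φ x₀,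
      ∀ x ∈ Metric.ball x₀ δ, c * |x - x₀|^2 ≤ φ x - φ x₀ - y₀ * (x - x₀)) :
    ∀ y₀ : ℝ, deriv ψ y₀ ∈ P →
      ∃ M : ℝ, ∀ᶠ y in 𝓝[≠] y₀, |deriv ψ y - deriv ψ y₀| / |y - y₀| ≤ M := by
  intro y₀ hy₀P
  choose X hX using exists_mem_subdiff_of_superlinear
    (continuousOn_univ.1 (hφ.convexOn.continuousOn isOpen_univ)) hsl
  have hXcont := hφ.continuous_of_forall_mem_subdiff hX
  have hderiv : ∀ y, deriv ψ y = X y := fun y =>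
    (hasDerivAt_of_forall_mem_subdiff (fun y => mem_subdiff_conj hψ (hX y))
      hXcont.continuousAt).deriv
  simp only [hderiv] at hy₀P ⊢
  obtain ⟨c, hc, δ, hδ, hst⟩ := hstrong (X y₀) hy₀P
  refine ⟨1 / c, ?_⟩
  filter_upwards [mem_nhdsWithin_of_mem_nhds (Metric.ball_mem_nhds y₀ (mul_pos hc hδ)),
    self_mem_nhdsWithin] with y hy hne
  have hpos : 0 < |y - y₀| := abs_pos.2 (sub_ne_zero.2 hne)
  rw [Metric.mem_ball, Real.dist_eq] at hy
  rw [div_le_div_iff₀ hpos hc, one_mul, mul_comm]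
  exact hφ.convexOn.mul_abs_sub_le_of_strongly_convex_at hc (hst y₀ (hX y₀)) (hX y) hy

theorem stmt12 (φ ψ : ℝ → ℝ) (hφ : StrictConvexOn ℝ Set.univ φ)
    (hsl : Tendsto (fun x => φ x / |x|) (Bornology.cobounded ℝ) atTop)
    (hψ : ∀ y, IsLUB {z | ∃ x, z = x * y - φ x} (ψ y))
    (P : Set ℝ) (hPmeas : MeasurableSet P) (hP : 0 < volume P)
    (hstrong : ∀ x₀ ∈ P, ∃ c > (0:ℝ), ∃ δ > (0:ℝ), ∀ y₀ ∈ subdiff φ x₀,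
      ∀ x ∈ Metric.ball x₀ δ, c * |x - x₀|^2 ≤ φ x - φ x₀ - y₀ * (x - x₀)) :
    ∀ y₀ : ℝ, deriv ψ y₀ ∈ P →
      ∃ M : ℝ, ∀ᶠ y in 𝓝[≠] y₀, |deriv ψ y - deriv ψ y₀| / |y - y₀| ≤ M :=
  stmt12_general φ ψ hφ hsl hψ P hstrong
end
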